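/- arXiv:0907.3446 — 2 statements merged into one kernel-verified Lean document; each statement's English description precedes it below -/
import Mathlib

section
/- Let k and p be natural numbers with 1 ≤ k ≤ p and let ρ > 0 be real. Then the Lebesgue integral over ℝ^k satisfies ∫_{ℝ^k} (ρ² + ‖t‖²)^{-(p+1)/2} dt = π^{k/2} · (Γ((p+1−k)/2) / Γ((p+1)/2)) · ρ^{k−p−1}. Equivalently, setting p' = p − k, the integral equals ρ^{-(p'+1)} · vol(S^p)/vol(S^{p'}), where vol(S^n) = 2π^{(n+1)/2}/Γ((n+1)/2) is the n-dimensional volume of the unit n-sphere. -/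
/-!
Integrating in polar coordinates reduces the integral over `ℝ^k` to `k · vol(B^k)` times the
radial integral `∫₀^∞ y^(k-1) (ρ² + y²)^(-s) dy` with `s = (p+1)/2`. The scaling `y = ρ x` pulls
out `ρ^(k-2s)`; then `u = x²` and `u = v/(1-v)` turn what remains into Euler's Beta integral
`B(k/2, s - k/2) / 2`. Since `vol(B^k) = π^(k/2) / Γ(k/2 + 1)`, the factor `Γ(k/2)` cancels.
-/

open MeasureTheory Real Set Module

theorem integral_rpow_mul_one_sub_rpow {a b : ℝ} (ha : 0 < a) (hb : 0 < b) :
    ∫ x in (0 : ℝ)..1, x ^ (a - 1) * (1 - x) ^ (b - 1) = Gamma a * Gamma b / Gamma (a + b) := by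
  have hcast : ((∫ x in (0 : ℝ)..1, x ^ (a - 1) * (1 - x) ^ (b - 1) : ℝ) : ℂ) =
      Complex.betaIntegral a b := by
    rw [Complex.betaIntegral, ← intervalIntegral.integral_ofReal]
    refine intervalIntegral.integral_congr fun x hx => ?_
    rw [uIcc_of_le zero_le_one] at hx
    push_cast [Complex.ofReal_cpow hx.1, Complex.ofReal_cpow (sub_nonneg.2 hx.2)]
    rfl
  apply Complex.ofReal_injective
  rw [hcast, Complex.betaIntegral_eq_Gamma_mul_div _ _ (by simpa) (by simpa)]
  push_cast [← Complex.Gamma_ofReal]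
  rfl

theorem image_div_one_sub_Ioo : (fun x : ℝ => x / (1 - x)) '' Ioo 0 1 = Ioi 0 := by
  ext u
  constructor
  · rintro ⟨x, ⟨hx0, hx1⟩, rfl⟩
    exact div_pos hx0 (by linarith)
  · intro (hu : 0 < u)
    refine ⟨u / (1 + u), ⟨by positivity, (div_lt_one (by positivity)).2 (by linarith)⟩, ?_⟩
    field_simp
    ring

theorem integral_Ioi_rpow_mul_one_add_rpow_neg {a s : ℝ} (ha : 0 < a) (has : a < s) :
    ∫ u in Ioi (0 : ℝ), u ^ (a - 1) * (1 + u) ^ (-s) = Gamma a * Gamma (s - a) / Gamma s := by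
  have hderiv : ∀ x ∈ Ioo (0 : ℝ) 1, HasDerivWithinAt (fun x => x / (1 - x)) ((1 - x) ^ 2)⁻¹
      (Ioo 0 1) x := fun x hx => by
    have h1 : (1 : ℝ) - x ≠ 0 := by linarith [hx.2]
    have hd := (hasDerivAt_id x).div ((hasDerivAt_const x (1 : ℝ)).sub (hasDerivAt_id x)) h1
    exact (hd.congr_deriv (by simp)).hasDerivWithinAt
  have hinj : InjOn (fun x : ℝ => x / (1 - x)) (Ioo 0 1) := fun x hx y hy hxy => by
    rw [div_eq_div_iff (by linarith [hx.2]) (by linarith [hy.2])] at hxy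
    linarith
  rw [← image_div_one_sub_Ioo, integral_image_eq_integral_abs_deriv_smul measurableSet_Ioo
    hderiv hinj]
  have hbeta := integral_rpow_mul_one_sub_rpow ha (sub_pos.2 has)
  rw [add_sub_cancel, intervalIntegral.integral_of_le zero_le_one,
    integral_Ioc_eq_integral_Ioo] at hbeta
  rw [← hbeta]
  refine setIntegral_congr_fun measurableSet_Ioo fun x ⟨hx0, hx1⟩ => ?_
  have h1 : (0 : ℝ) < 1 - x := by linarith
  have hsum : 1 + x / (1 - x) = (1 - x)⁻¹ := by field_simp; ring
  have hpow : ((1 - x) ^ 2)⁻¹ * (1 - x) ^ (-(a - 1)) * (1 - x) ^ s = (1 - x) ^ (s - a - 1) := by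
    rw [← rpow_natCast, ← rpow_neg h1.le, ← rpow_add h1, ← rpow_add h1]
    ring_nf
  rw [smul_eq_mul, abs_of_pos (by positivity), hsum, div_rpow hx0.le h1.le, inv_rpow h1.le,
    ← rpow_neg h1.le, neg_neg, ← hpow, div_eq_mul_inv, ← rpow_neg h1.le]
  ring

theorem integral_Ioi_rpow_mul_one_add_sq_rpow_neg {a s : ℝ} (ha : 0 < a) (has : a < 2 * s) :
    ∫ x in Ioi (0 : ℝ), x ^ (a - 1) * (1 + x ^ 2) ^ (-s) =
      Gamma (a / 2) * Gamma (s - a / 2) / (2 * Gamma s) := by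
  have hsub := integral_comp_rpow_Ioi_of_pos (g := fun u => u ^ (a / 2 - 1) * (1 + u) ^ (-s))
    two_pos
  rw [integral_Ioi_rpow_mul_one_add_rpow_neg (by positivity) (by linarith)] at hsub
  rw [mul_comm (2 : ℝ), ← div_div, ← hsub, ← integral_div]
  refine setIntegral_congr_fun measurableSet_Ioi fun x (hx : 0 < x) => ?_
  have hpow : x ^ ((2 : ℝ) - 1) * (x ^ (2 : ℝ)) ^ (a / 2 - 1) = x ^ (a - 1) := by
    rw [← rpow_mul hx.le, ← rpow_add hx]
    ring_nf
  rw [smul_eq_mul, ← hpow, rpow_two]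
  ring

theorem integral_Ioi_rpow_mul_sq_add_sq_rpow_neg {ρ a s : ℝ} (hρ : 0 < ρ) (ha : 0 < a)
    (has : a < 2 * s) :
    ∫ y in Ioi (0 : ℝ), y ^ (a - 1) * (ρ ^ 2 + y ^ 2) ^ (-s) =
      ρ ^ (a - 2 * s) * (Gamma (a / 2) * Gamma (s - a / 2) / (2 * Gamma s)) := by
  have hscale := integral_comp_mul_left_Ioi' (fun y => y ^ (a - 1) * (ρ ^ 2 + y ^ 2) ^ (-s)) 0 hρ
  rw [mul_zero] at hscale
  rw [← hscale, ← integral_Ioi_rpow_mul_one_add_sq_rpow_neg ha has, smul_eq_mul,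
    ← integral_const_mul, ← integral_const_mul]
  refine setIntegral_congr_fun measurableSet_Ioi fun x (hx : 0 < x) => ?_
  have hρpow : ρ * ρ ^ (a - 1) * (ρ ^ 2) ^ (-s) = ρ ^ (a - 2 * s) := by
    rw [rpow_sub_one hρ.ne', mul_div_cancel₀ _ hρ.ne', ← rpow_natCast, ← rpow_mul hρ.le,
      ← rpow_add hρ]
    ring_nf
  rw [show ρ ^ 2 + (ρ * x) ^ 2 = ρ ^ 2 * (1 + x ^ 2) by ring, mul_rpow hρ.le hx.le,
    mul_rpow (by positivity) (by positivity), ← hρpow]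
  ring

theorem integral_rpow_sq_add_norm_sq_neg {E : Type*} [NormedAddCommGroup E]
    [InnerProductSpace ℝ E] [FiniteDimensional ℝ E] [MeasurableSpace E] [BorelSpace E]
    [Nontrivial E] {ρ s : ℝ} (hρ : 0 < ρ) (hs : (finrank ℝ E : ℝ) / 2 < s) :
    ∫ x : E, (ρ ^ 2 + ‖x‖ ^ 2) ^ (-s) =
      π ^ ((finrank ℝ E : ℝ) / 2) * (Gamma (s - finrank ℝ E / 2) / Gamma s) *
        ρ ^ ((finrank ℝ E : ℝ) - 2 * s) := by
  rw [integral_fun_norm_addHaar volume fun y => (ρ ^ 2 + y ^ 2) ^ (-s)]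
  set n := finrank ℝ E
  have hn : (0 : ℝ) < n := by exact_mod_cast finrank_pos
  have hball : (volume (Metric.ball (0 : E) 1)).toReal = √π ^ n / Gamma (n / 2 + 1) := by
    rw [InnerProductSpace.volume_ball, ENNReal.ofReal_one, one_pow, one_mul,
      ENNReal.toReal_ofReal (by positivity)]
  have hpow_cast : ∀ y : ℝ, y ^ (n - 1) = y ^ ((n : ℝ) - 1) := fun y => by
    rw [← rpow_natCast, Nat.cast_sub finrank_pos, Nat.cast_one]
  simp only [nsmul_eq_mul, smul_eq_mul, hpow_cast, measureReal_def, hball]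
  rw [integral_Ioi_rpow_mul_sq_add_sq_rpow_neg hρ hn (by linarith), Gamma_add_one (by positivity),
    sqrt_eq_rpow, ← rpow_natCast, ← rpow_mul pi_nonneg]
  have hΓn := (Gamma_pos_of_pos (s := n / 2) (by positivity)).ne'
  have hΓs := (Gamma_pos_of_pos (s := s) (by linarith)).ne'
  rw [one_div_mul_eq_div]
  field_simp

/-- For natural numbers `1 ≤ k ≤ p` and real `ρ > 0`, the Lebesgue integral over `ℝ^k`
(with the Euclidean norm) of `t ↦ (ρ² + ‖t‖²)^(-(p+1)/2)` equals
`π^(k/2) · (Γ((p+1−k)/2)/Γ((p+1)/2)) · ρ^(k−p−1)`. -/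
theorem iterated_fiber_integral (k p : ℕ) (hk : 1 ≤ k) (hkp : k ≤ p) (ρ : ℝ) (hρ : 0 < ρ) :
    ∫ t : EuclideanSpace ℝ (Fin k), (ρ ^ 2 + ‖t‖ ^ 2) ^ (-((p : ℝ) + 1) / 2) =
      π ^ ((k : ℝ) / 2) *
        (Real.Gamma (((p : ℝ) + 1 - k) / 2) / Real.Gamma (((p : ℝ) + 1) / 2)) *
        ρ ^ ((k : ℝ) - p - 1) := by
  have : Nonempty (Fin k) := ⟨⟨0, hk⟩⟩
  have hs : (finrank ℝ (EuclideanSpace ℝ (Fin k)) : ℝ) / 2 < ((p : ℝ) + 1) / 2 := by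
    rw [finrank_euclideanSpace_fin]
    linarith [(Nat.cast_le (α := ℝ)).2 hkp]
  rw [neg_div, integral_rpow_sq_add_norm_sq_neg hρ hs, finrank_euclideanSpace_fin]
  ring_nf
end

section
/- Let m, n ≥ 1 be natural numbers and set p = m + n. Let K ⊂ ℝ^m and K' ⊂ ℝ^n be compact boxes (products of closed intervals), and let x : ℝ^m → ℝ^{p+1} and y : ℝ^n → ℝ^{p+1} be continuously differentiable maps. For R > 0 let A_R = {(s, t) ∈ K × K' : ‖y(t) − x(s)‖ ≥ R}. Then |∫_{A_R} det(y(t) − x(s), ∂x/∂s₁, …, ∂x/∂s_m, ∂y/∂t₁, …, ∂y/∂t_n) · ‖y(t) − x(s)‖^{-(p+1)} ds dt| ≤ (1/R^p) · ∫_{K × K'} (∏_{i=1}^m ‖∂x/∂s_i(s)‖) · (∏_{j=1}^n ‖∂y/∂t_j(t)‖) ds dt; in particular, the restricted integral tends to 0 as R → ∞. -/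
open MeasureTheory Real Filter

/-!
By Hadamard's inequality the determinant is at most `‖y t - x s‖ ∏ᵢ ‖∂x/∂sᵢ‖ ∏ⱼ ‖∂y/∂tⱼ‖`, so on
`A_R`, where `‖y t - x s‖ ≥ R`, the integrand is bounded by `R^(-p) ∏ᵢ ‖∂x/∂sᵢ‖ ∏ⱼ ‖∂y/∂tⱼ‖`;
integrating this over `A_R ⊆ K × K'` gives the bound. The limit is even simpler: `‖y t - x s‖` is
bounded on the compact `K × K'`, so `A_R` is empty for all large `R`.
-/

theorem abs_det_le_prod_norm_col {N : ℕ} (v : Fin N → EuclideanSpace ℝ (Fin N)) :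
    |(Matrix.of fun i j => v j i).det| ≤ ∏ j, ‖v j‖ := by
  have : Fact (Module.finrank ℝ (EuclideanSpace ℝ (Fin N)) = N) := ⟨finrank_euclideanSpace_fin⟩
  let b := EuclideanSpace.basisFun (Fin N) ℝ
  have hdet : (Matrix.of fun i j => v j i).det = b.toBasis.det v := by
    rw [Module.Basis.det_apply]
    rfl
  rw [hdet, ← b.toBasis.orientation.volumeForm_robust' b v]
  exact Orientation.abs_volumeForm_apply_le _ v

theorem abs_div_pow_succ_le_of_abs_le_mul {d r P R : ℝ} {p : ℕ} (hR : 0 < R) (hr : R ≤ r)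
    (hd : |d| ≤ r * P) (hP : 0 ≤ P) : |d / r ^ (p + 1)| ≤ 1 / R ^ p * P := by
  have hr0 : 0 < r := hR.trans_le hr
  rw [abs_div, abs_of_pos (pow_pos hr0 _)]
  calc |d| / r ^ (p + 1) ≤ r * P / r ^ (p + 1) := by gcongr
    _ = P / r ^ p := by field_simp; ring
    _ ≤ P / R ^ p := by gcongr
    _ = 1 / R ^ p * P := by ring

theorem abs_det_cons_div_norm_pow_le {p : ℕ} (v : EuclideanSpace ℝ (Fin (p + 1)))
    (w : Fin p → EuclideanSpace ℝ (Fin (p + 1))) {R : ℝ} (hR : 0 < R) (hv : R ≤ ‖v‖) :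
    |(Matrix.of fun i j =>
        (Fin.cons v w : Fin (p + 1) → EuclideanSpace ℝ (Fin (p + 1))) j i).det / ‖v‖ ^ (p + 1)| ≤
      1 / R ^ p * ∏ j, ‖w j‖ := by
  have hadamard := abs_det_le_prod_norm_col (Fin.cons v w : Fin (p + 1) → _)
  simp only [Fin.prod_univ_succ, Fin.cons_zero, Fin.cons_succ] at hadamard
  exact abs_div_pow_succ_le_of_abs_le_mul hR hv hadamard
    (Finset.prod_nonneg fun j _ => norm_nonneg (w j))

theorem Fin.prod_univ_comp_append {α M : Type*} [CommMonoid M] {m n : ℕ} (f : α → M)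
    (u : Fin m → α) (w : Fin n → α) :
    ∏ j, f (Fin.append u w j) = (∏ i, f (u i)) * ∏ j, f (w j) := by
  simp [Fin.prod_univ_add]

theorem isCompact_euclideanSpace_box {ι : Type*} (a b : ι → ℝ) :
    IsCompact {s : EuclideanSpace ℝ ι | ∀ i, s i ∈ Set.Icc (a i) (b i)} := by
  convert (PiLp.homeomorph 2 fun _ : ι => ℝ).isCompact_preimage.mpr
    (isCompact_Icc (a := a) (b := b)) using 1
  ext s
  exact forall_and

theorem norm_setIntegral_le_setIntegral_of_norm_le {α E : Type*} [MeasurableSpace α]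
    [NormedAddCommGroup E] [NormedSpace ℝ E] {μ : Measure α} {s t : Set α} {f : α → E}
    {g : α → ℝ} (hs : MeasurableSet s) (hst : s ⊆ t) (hg : IntegrableOn g t μ) (hg0 : 0 ≤ g)
    (hfg : ∀ x ∈ s, ‖f x‖ ≤ g x) : ‖∫ x in s, f x ∂μ‖ ≤ ∫ x in t, g x ∂μ :=
  (norm_integral_le_of_norm_le (hg.mono_set hst) (ae_restrict_of_forall_mem hs hfg)).trans
    (setIntegral_mono_set hg (Eventually.of_forall hg0) hst.eventuallyLE)

theorem general_linking_integral_far_region_vanishes_general (m n : ℕ)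
    (a b : Fin m → ℝ) (a' b' : Fin n → ℝ)
    (x : EuclideanSpace ℝ (Fin m) → EuclideanSpace ℝ (Fin (m + n + 1)))
    (y : EuclideanSpace ℝ (Fin n) → EuclideanSpace ℝ (Fin (m + n + 1)))
    (hx : ContDiff ℝ 1 x) (hy : ContDiff ℝ 1 y) :
    (∀ R : ℝ, 0 < R →
      |∫ st in {st : EuclideanSpace ℝ (Fin m) × EuclideanSpace ℝ (Fin n) |
            (∀ i, st.1 i ∈ Set.Icc (a i) (b i)) ∧ (∀ j, st.2 j ∈ Set.Icc (a' j) (b' j)) ∧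
            R ≤ ‖y st.2 - x st.1‖},
          Matrix.det (Matrix.of fun i j =>
            (Fin.cons (y st.2 - x st.1)
              (Fin.append
                (fun i' : Fin m => fderiv ℝ x st.1 (EuclideanSpace.single i' 1))
                (fun j' : Fin n => fderiv ℝ y st.2 (EuclideanSpace.single j' 1))) :
              Fin (m + n + 1) → EuclideanSpace ℝ (Fin (m + n + 1))) j i) /
            ‖y st.2 - x st.1‖ ^ (m + n + 1)| ≤
        (1 / R ^ (m + n)) *
          ∫ st in {st : EuclideanSpace ℝ (Fin m) × EuclideanSpace ℝ (Fin n) |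
              (∀ i, st.1 i ∈ Set.Icc (a i) (b i)) ∧ (∀ j, st.2 j ∈ Set.Icc (a' j) (b' j))},
            (∏ i, ‖fderiv ℝ x st.1 (EuclideanSpace.single i 1)‖) *
              (∏ j, ‖fderiv ℝ y st.2 (EuclideanSpace.single j 1)‖)) ∧
    Tendsto (fun R : ℝ =>
        ∫ st in {st : EuclideanSpace ℝ (Fin m) × EuclideanSpace ℝ (Fin n) |
            (∀ i, st.1 i ∈ Set.Icc (a i) (b i)) ∧ (∀ j, st.2 j ∈ Set.Icc (a' j) (b' j)) ∧
            R ≤ ‖y st.2 - x st.1‖},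
          Matrix.det (Matrix.of fun i j =>
            (Fin.cons (y st.2 - x st.1)
              (Fin.append
                (fun i' : Fin m => fderiv ℝ x st.1 (EuclideanSpace.single i' 1))
                (fun j' : Fin n => fderiv ℝ y st.2 (EuclideanSpace.single j' 1))) :
              Fin (m + n + 1) → EuclideanSpace ℝ (Fin (m + n + 1))) j i) /
            ‖y st.2 - x st.1‖ ^ (m + n + 1))
      atTop (nhds 0) := by
  have hK := (isCompact_euclideanSpace_box a b).prod (isCompact_euclideanSpace_box a' b')
  have hdist : Continuous fun st : EuclideanSpace ℝ (Fin m) × EuclideanSpace ℝ (Fin n) =>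
      ‖y st.2 - x st.1‖ := by
    fun_prop
  have hdx := hx.continuous_fderiv one_ne_zero
  have hdy := hy.continuous_fderiv one_ne_zero
  have hg : Continuous fun st : EuclideanSpace ℝ (Fin m) × EuclideanSpace ℝ (Fin n) =>
      (∏ i, ‖fderiv ℝ x st.1 (EuclideanSpace.single i 1)‖) *
        ∏ j, ‖fderiv ℝ y st.2 (EuclideanSpace.single j 1)‖ := by
    fun_prop
  refine ⟨fun R hR => ?_, ?_⟩
  · have hA : MeasurableSet {st : EuclideanSpace ℝ (Fin m) × EuclideanSpace ℝ (Fin n) |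
        (∀ i, st.1 i ∈ Set.Icc (a i) (b i)) ∧ (∀ j, st.2 j ∈ Set.Icc (a' j) (b' j)) ∧
          R ≤ ‖y st.2 - x st.1‖} :=
      (measurable_fst (isCompact_euclideanSpace_box a b).isClosed.measurableSet).inter
        ((measurable_snd (isCompact_euclideanSpace_box a' b').isClosed.measurableSet).inter
          (isClosed_le continuous_const hdist).measurableSet)
    rw [← integral_const_mul, ← Real.norm_eq_abs]
    refine norm_setIntegral_le_setIntegral_of_norm_le hA (fun st hst => ⟨hst.1, hst.2.1⟩)
      ((continuous_const.mul hg).continuousOn.integrableOn_compact hK)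
      (fun st => by positivity) fun st hst => ?_
    rw [Real.norm_eq_abs, ← Fin.prod_univ_comp_append]
    exact abs_det_cons_div_norm_pow_le _ _ hR hst.2.2
  · obtain ⟨C, hC⟩ := hK.exists_bound_of_continuousOn hdist.continuousOn
    refine tendsto_const_nhds.congr' ?_
    filter_upwards [eventually_gt_atTop C] with R hR
    refine (setIntegral_eq_zero_of_forall_eq_zero fun st hst => absurd hst.2.2 ?_).symm
    exact not_le.mpr ((norm_norm (y st.2 - x st.1) ▸ hC st ⟨hst.1, hst.2.1⟩).trans_lt hR)

/-- For `C¹` parametrizations `x : ℝ^m → ℝ^(m+n+1)` and `y : ℝ^n → ℝ^(m+n+1)` over compact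
boxes, the general Gauss linking integrand restricted to the region `A_R` where
`‖y(t) − x(s)‖ ≥ R` integrates to something of absolute value at most
`(1/R^(m+n)) · ∫ (∏ᵢ‖∂x/∂sᵢ‖)(∏ⱼ‖∂y/∂tⱼ‖)`; in particular the restricted integral tends
to `0` as `R → ∞`. -/
theorem general_linking_integral_far_region_vanishes (m n : ℕ) (hm : 1 ≤ m) (hn : 1 ≤ n)
    (a b : Fin m → ℝ) (a' b' : Fin n → ℝ)
    (x : EuclideanSpace ℝ (Fin m) → EuclideanSpace ℝ (Fin (m + n + 1)))
    (y : EuclideanSpace ℝ (Fin n) → EuclideanSpace ℝ (Fin (m + n + 1)))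
    (hx : ContDiff ℝ 1 x) (hy : ContDiff ℝ 1 y) :
    (∀ R : ℝ, 0 < R →
      |∫ st in {st : EuclideanSpace ℝ (Fin m) × EuclideanSpace ℝ (Fin n) |
            (∀ i, st.1 i ∈ Set.Icc (a i) (b i)) ∧ (∀ j, st.2 j ∈ Set.Icc (a' j) (b' j)) ∧
            R ≤ ‖y st.2 - x st.1‖},
          Matrix.det (Matrix.of fun i j =>
            (Fin.cons (y st.2 - x st.1)
              (Fin.append
                (fun i' : Fin m => fderiv ℝ x st.1 (EuclideanSpace.single i' 1))
                (fun j' : Fin n => fderiv ℝ y st.2 (EuclideanSpace.single j' 1))) :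
              Fin (m + n + 1) → EuclideanSpace ℝ (Fin (m + n + 1))) j i) /
            ‖y st.2 - x st.1‖ ^ (m + n + 1)| ≤
        (1 / R ^ (m + n)) *
          ∫ st in {st : EuclideanSpace ℝ (Fin m) × EuclideanSpace ℝ (Fin n) |
              (∀ i, st.1 i ∈ Set.Icc (a i) (b i)) ∧ (∀ j, st.2 j ∈ Set.Icc (a' j) (b' j))},
            (∏ i, ‖fderiv ℝ x st.1 (EuclideanSpace.single i 1)‖) *
              (∏ j, ‖fderiv ℝ y st.2 (EuclideanSpace.single j 1)‖)) ∧
    Tendsto (fun R : ℝ =>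
        ∫ st in {st : EuclideanSpace ℝ (Fin m) × EuclideanSpace ℝ (Fin n) |
            (∀ i, st.1 i ∈ Set.Icc (a i) (b i)) ∧ (∀ j, st.2 j ∈ Set.Icc (a' j) (b' j)) ∧
            R ≤ ‖y st.2 - x st.1‖},
          Matrix.det (Matrix.of fun i j =>
            (Fin.cons (y st.2 - x st.1)
              (Fin.append
                (fun i' : Fin m => fderiv ℝ x st.1 (EuclideanSpace.single i' 1))
                (fun j' : Fin n => fderiv ℝ y st.2 (EuclideanSpace.single j' 1))) :
              Fin (m + n + 1) → EuclideanSpace ℝ (Fin (m + n + 1))) j i) /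
            ‖y st.2 - x st.1‖ ^ (m + n + 1))
      atTop (nhds 0) :=
  general_linking_integral_far_region_vanishes_general m n a b a' b' x y hx hy
end
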